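/- Let ℓ ≥ 4 and let u < v be consecutive elements of V_ℓ (prefixes of the infinite Fibonacci word with α-value ≥ w_ℓ, with no element of V_ℓ strictly between them in the prefix order). Then v = u·s for some word s in the set S_ℓ = {w_{ℓ−2}, w̃_{ℓ−2}, w_{ℓ−1}, w̃_{ℓ−1}}. -/
import Mathlib


noncomputable section

/-- `F i` is the Fibonacci number `F_i` of the paper (`F_0 = 1`, `F_1 = 1`, `F_2 = 2`, ...). -/
def F (i : ℕ) : ℕ := Nat.fib (i + 1)

/-- The Fibonacci sequence of words on the alphabet `{a, b}` where `a = true` and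
`b = false`: `W 1 = a`, `W 2 = ab`, `W (i+2) = W (i+1) ++ W i`
(setting `W 0 = b`, consistent with the recurrence). -/
def W : ℕ → List Bool
  | 0 => [false]
  | 1 => [true]
  | n + 2 => W (n + 1) ++ W n

/-- `twoSwap l` is the word `l` with its last two letters swapped (`w̃` of the paper). -/
def twoSwap (l : List Bool) : List Bool :=
  l.dropLast.dropLast ++ (l.drop (l.length - 2)).reverse

/-- `x` belongs to the set `F̄ = {0,1,2,3,5,8,...}` of all Fibonacci numbers (including `0`). -/
def IsFib (x : ℕ) : Prop := ∃ i : ℕ, Nat.fib i = x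

open scoped Classical in
/-- The map `ῑ : ℕ → ℕ`: `ῑ(x) = x` if `x ∈ F̄`, and `ῑ(x) = x - 2 F_{i-2}`
if `F_i < x < F_{i+1}` for the (unique) integer `i ≥ 3`. -/
noncomputable def iotaBar (x : ℕ) : ℕ :=
  if IsFib x then x
  else x - 2 * F (sInf {i : ℕ | x < F (i + 1)} - 2)

/-- `ᾱ(x)` is the eventual constant value of the iterates of `ῑ` at `x`. -/
noncomputable def alphaBar (x : ℕ) : ℕ := iotaBar^[x] x

/-- `pref n` is the prefix of length `n` of the infinite Fibonacci word `w_∞`. -/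
def pref (n : ℕ) : List Bool := (W (n + 2)).take n

/-- `v` is a (finite) prefix of the infinite Fibonacci word `w_∞`. -/
def FibPrefix (v : List Bool) : Prop := ∃ i : ℕ, v <+: W i

/-- The map `ι` on prefixes of `w_∞`: `ι(v)` is the prefix of `w_∞` of length `ῑ(|v|)`. -/
noncomputable def iotaW (v : List Bool) : List Bool := pref (iotaBar v.length)

/-- The map `α` on prefixes of `w_∞`: `α(v)` is the prefix of `w_∞` of length `ᾱ(|v|)`,
an element of `{ε, w_1, w_2, ...}`. -/
noncomputable def alphaW (v : List Bool) : List Bool := pref (alphaBar v.length)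

/-- `V_ℓ` is the set of prefixes `v` of `w_∞` with `α(v) ≥ w_ℓ` in the prefix order. -/
def V (ℓ : ℕ) : Set (List Bool) := {v : List Bool | FibPrefix v ∧ W ℓ <+: alphaW v}

/-- `u < v` are consecutive elements of a set of words for the prefix order. -/
def ConsecInV (S : Set (List Bool)) (u v : List Bool) : Prop :=
  u ∈ S ∧ v ∈ S ∧ u <+: v ∧ u ≠ v ∧
    ∀ w ∈ S, u <+: w → w <+: v → w = u ∨ w = v


-- ## Auxiliary development

-- ### Fibonacci numerics
lemma F_add_two (k : ℕ) : F (k + 2) = F k + F (k + 1) := Nat.fib_add_two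

lemma F_pos (k : ℕ) : 0 < F k := Nat.fib_pos.mpr k.succ_pos

lemma F_mono {k l : ℕ} (h : k ≤ l) : F k ≤ F l := Nat.fib_mono (by omega)

lemma F_lt {k l : ℕ} (hk : 1 ≤ k) (h : k < l) : F k < F l :=
  lt_of_lt_of_le (Nat.fib_lt_fib_succ (n := k + 1) (by omega)) (Nat.fib_mono (by omega))

lemma lt_F_add_two : ∀ n, n < F (n + 2) := by
  intro n
  induction n with
  | zero => exact F_pos 2
  | succ n ih =>
      show n + 1 < F (n + 3)
      have h : F (n + 3) = F (n + 1) + F (n + 2) := F_add_two (n + 1)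
      have := F_pos (n + 1)
      omega

-- ### iotaBar / alphaBar
lemma not_isFib_between {i x : ℕ} (hi : 1 ≤ i) (h1 : F i < x) (h2 : x < F (i + 1)) :
    ¬ IsFib x := by
  rintro ⟨j, rfl⟩
  unfold F at h1 h2
  rcases le_or_gt j (i + 1) with h | h
  · have : Nat.fib j ≤ Nat.fib (i + 1) := Nat.fib_mono h
    omega
  · have : Nat.fib (i + 1 + 1) ≤ Nat.fib j := Nat.fib_mono (by omega)
    omega

lemma iotaBar_between {i x : ℕ} (hi : 3 ≤ i) (h1 : F i < x) (h2 : x < F (i + 1)) :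
    iotaBar x = x - 2 * F (i - 2) := by
  have hnf := not_isFib_between (by omega) h1 h2
  have hs : sInf {j : ℕ | x < F (j + 1)} = i := by
    have hne : i ∈ {j : ℕ | x < F (j + 1)} := h2
    refine le_antisymm (Nat.sInf_le hne) ?_
    by_contra hlt
    push_neg at hlt
    have hmem := Nat.sInf_mem (⟨i, hne⟩ : {j : ℕ | x < F (j + 1)}.Nonempty)
    have hle : F (sInf {j : ℕ | x < F (j + 1)} + 1) ≤ F i := F_mono (by omega)
    have hx : x < F (sInf {j : ℕ | x < F (j + 1)} + 1) := hmem
    omega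
  rw [iotaBar, if_neg hnf, hs]

lemma iotaBar_fib {x : ℕ} (h : IsFib x) : iotaBar x = x := if_pos h

lemma iotaBar_le (x : ℕ) : iotaBar x ≤ x := by
  rw [iotaBar]; split
  · exact le_rfl
  · exact Nat.sub_le _ _

lemma iotaBar_lt {x : ℕ} (hx : ¬ IsFib x) : iotaBar x < x := by
  have hx0 : x ≠ 0 := by rintro rfl; exact hx ⟨0, rfl⟩
  rw [iotaBar, if_neg hx]
  have := F_pos (sInf {i : ℕ | x < F (i + 1)} - 2)
  omega

lemma alphaBar_fib {x : ℕ} (h : IsFib x) : alphaBar x = x :=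
  Function.iterate_fixed (iotaBar_fib h) x

lemma iter_le : ∀ (k x : ℕ), iotaBar^[k] x ≤ x := by
  intro k
  induction k with
  | zero => intro x; exact le_rfl
  | succ k ih =>
      intro x
      rw [Function.iterate_succ_apply]
      exact le_trans (ih (iotaBar x)) (iotaBar_le x)

lemma alphaBar_le (x : ℕ) : alphaBar x ≤ x := iter_le x x

lemma alphaBar_fixed : ∀ x : ℕ, iotaBar (alphaBar x) = alphaBar x ∧
    alphaBar (iotaBar x) = alphaBar x := by
  intro x
  induction x using Nat.strong_induction_on with
  | _ x ih =>
    by_cases hf : IsFib x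
    · rw [alphaBar_fib hf, iotaBar_fib hf, alphaBar_fib hf]
      exact ⟨rfl, rfl⟩
    · have hlt := iotaBar_lt hf
      obtain ⟨y, rfl⟩ : ∃ y, x = y + 1 := ⟨x - 1, by omega⟩
      have ihy := ih (iotaBar (y + 1)) hlt
      have e1 : alphaBar (y + 1) = iotaBar^[y] (iotaBar (y + 1)) :=
        Function.iterate_succ_apply iotaBar y (y + 1)
      have hzy : iotaBar (y + 1) ≤ y := by omega
      set z := iotaBar (y + 1) with hz
      obtain ⟨d, hd⟩ : ∃ d, y = d + z := ⟨y - z, by omega⟩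
      have e2 : iotaBar^[y] z = alphaBar z := by
        rw [hd, Function.iterate_add_apply]
        have hzz : iotaBar^[z] z = alphaBar z := rfl
        rw [hzz]
        exact Function.iterate_fixed ihy.1 d
      have etot : alphaBar (y + 1) = alphaBar (iotaBar (y + 1)) := e1.trans e2
      refine ⟨?_, etot.symm⟩
      rw [etot]; exact ihy.1

lemma alpha_step {i x : ℕ} (hi : 3 ≤ i) (h1 : F i < x) (h2 : x < F (i + 1)) :
    alphaBar x = alphaBar (x - 2 * F (i - 2)) := by
  rw [← iotaBar_between hi h1 h2]
  exact ((alphaBar_fixed x).2).symm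

lemma alpha_corr {k x : ℕ} (h1 : F (k + 2) < x) (h2 : x < F (k + 2) + F (k + 4)) :
    alphaBar (2 * F (k + 3) + x) = alphaBar x := by
  have e1 : F (k + 4) = F (k + 2) + F (k + 3) := F_add_two (k + 2)
  have e2 : F (k + 5) = F (k + 3) + F (k + 4) := F_add_two (k + 3)
  have e3 : F (k + 6) = F (k + 4) + F (k + 5) := F_add_two (k + 4)
  have h1' : F (k + 5) < 2 * F (k + 3) + x := by omega
  have h2' : 2 * F (k + 3) + x < F (k + 6) := by omega
  have h := alpha_step (i := k + 5) (by omega) h1' h2'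
  rw [show k + 5 - 2 = k + 3 by omega] at h
  rw [h, show 2 * F (k + 3) + x - 2 * F (k + 3) = x by omega]

lemma alphaBar_two : alphaBar 2 = 2 := alphaBar_fib ⟨3, rfl⟩
lemma alphaBar_three : alphaBar 3 = 3 := alphaBar_fib ⟨4, rfl⟩
lemma alphaBar_four : alphaBar 4 = 2 := by
  have h := alpha_step (i := 3) (x := 4) le_rfl (by decide) (by decide)
  rw [h, show (4 : ℕ) - 2 * F (3 - 2) = 2 by decide, alphaBar_two]

lemma alpha_fib_add_one : ∀ j, alphaBar (F j + 1) ≤ 3 := by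
  intro j
  induction j using Nat.strong_induction_on with
  | _ j ih =>
    match j with
    | 0 => rw [show F 0 + 1 = 2 by decide, alphaBar_two]; omega
    | 1 => rw [show F 1 + 1 = 2 by decide, alphaBar_two]; omega
    | 2 => rw [show F 2 + 1 = 3 by decide, alphaBar_three]
    | 3 => rw [show F 3 + 1 = 4 by decide, alphaBar_four]; omega
    | (t + 4) =>
        have e1 : F (t + 3) = F (t + 1) + F (t + 2) := F_add_two (t + 1)
        have e2 : F (t + 4) = F (t + 2) + F (t + 3) := F_add_two (t + 2)
        have e3 : F (t + 5) = F (t + 3) + F (t + 4) := F_add_two (t + 3)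
        have h3 : F 3 ≤ F (t + 3) := F_mono (by omega)
        have h1 : F (t + 4) < F (t + 4) + 1 := by omega
        have h2 : F (t + 4) + 1 < F (t + 5) := by
          have : F 3 = 3 := by decide
          omega
        have h := alpha_step (i := t + 4) (by omega) h1 h2
        rw [show t + 4 - 2 = t + 2 by omega] at h
        have hval : F (t + 4) + 1 - 2 * F (t + 2) = F (t + 1) + 1 := by omega
        rw [h, hval]
        exact ih (t + 1) (by omega)

lemma alpha_fib_sub_one : ∀ j, 2 ≤ j → alphaBar (F j - 1) ≤ 3 := by
  intro j
  induction j using Nat.strong_induction_on with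
  | _ j ih =>
    match j with
    | 0 => intro h; omega
    | 1 => intro h; omega
    | 2 =>
        intro _
        have h1 : alphaBar 1 = 1 := alphaBar_fib ⟨1, rfl⟩
        rw [show F 2 - 1 = 1 by decide, h1]; omega
    | 3 => intro _; rw [show F 3 - 1 = 2 by decide, alphaBar_two]; omega
    | 4 => intro _; rw [show F 4 - 1 = 4 by decide, alphaBar_four]; omega
    | 5 =>
        intro _
        have h := alpha_step (i := 4) (x := 7) (by omega) (by decide) (by decide)
        rw [show F 5 - 1 = 7 by decide, h,
          show (7 : ℕ) - 2 * F (4 - 2) = 3 by decide, alphaBar_three]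
    | (t + 6) =>
        intro _
        have e5 : F (t + 6) = F (t + 4) + F (t + 5) := F_add_two (t + 4)
        have e4 : F (t + 5) = F (t + 3) + F (t + 4) := F_add_two (t + 3)
        have e3 : F (t + 4) = F (t + 2) + F (t + 3) := F_add_two (t + 2)
        have e2 : F (t + 3) = F (t + 1) + F (t + 2) := F_add_two (t + 1)
        have ht2 : 2 ≤ F (t + 2) := by
          have h2 : F 2 ≤ F (t + 2) := F_mono (by omega)
          have : F 2 = 2 := by decide
          omega
        have hpos3 : 0 < F (t + 3) := F_pos _
        have h1 := alpha_step (i := t + 5) (by omega)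
          (show F (t + 5) < F (t + 6) - 1 by omega)
          (show F (t + 6) - 1 < F (t + 6) by have := F_pos (t + 6); omega)
        rw [show t + 5 - 2 = t + 3 by omega] at h1
        have hv1 : F (t + 6) - 1 - 2 * F (t + 3) = F (t + 4) + F (t + 2) - 1 := by omega
        have hlt23 : F (t + 2) < F (t + 3) := F_lt (by omega) (by omega)
        have h2 := alpha_step (i := t + 4) (by omega)
          (show F (t + 4) < F (t + 4) + F (t + 2) - 1 by omega)
          (show F (t + 4) + F (t + 2) - 1 < F (t + 5) by omega)
        rw [show t + 4 - 2 = t + 2 by omega] at h2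
        have hv2 : F (t + 4) + F (t + 2) - 1 - 2 * F (t + 2) = F (t + 3) - 1 := by omega
        rw [h1, hv1, h2, hv2]
        exact ih (t + 3) (by omega) (by omega)

lemma alpha_tight (k : ℕ) (hk : 1 ≤ k) : alphaBar (F (k + 2) + F k) = F (k + 1) := by
  have e1 : F (k + 2) = F k + F (k + 1) := F_add_two k
  have e2 : F (k + 3) = F (k + 1) + F (k + 2) := F_add_two (k + 1)
  have hFk : 0 < F k := F_pos k
  have hlt : F k < F (k + 1) := F_lt hk (by omega)
  have h := alpha_step (i := k + 2) (by omega)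
    (show F (k + 2) < F (k + 2) + F k by omega)
    (show F (k + 2) + F k < F (k + 3) by omega)
  rw [show k + 2 - 2 = k by omega] at h
  rw [h, show F (k + 2) + F k - 2 * F k = F (k + 1) by omega]
  exact alphaBar_fib ⟨k + 2, rfl⟩

lemma alpha_gap_empty {t x : ℕ} (h1 : F (t + 4) < x) (h2 : x < F (t + 5)) :
    alphaBar x < F (t + 4) := by
  have h := alpha_step (i := t + 4) (by omega) h1 h2
  rw [show t + 4 - 2 = t + 2 by omega] at h
  have hle := alphaBar_le (x - 2 * F (t + 2))
  have e4 : F (t + 5) = F (t + 3) + F (t + 4) := F_add_two (t + 3)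
  have e3 : F (t + 4) = F (t + 2) + F (t + 3) := F_add_two (t + 2)
  have e2 : F (t + 3) = F (t + 1) + F (t + 2) := F_add_two (t + 1)
  have hm : F (t + 1) ≤ F (t + 2) := F_mono (by omega)
  omega

lemma exists_leading {m : ℕ} (hm : 1 ≤ m) : ∃ i, 1 ≤ i ∧ F i ≤ m ∧ m < F (i + 1) := by
  have hex : ∃ j, m < F (j + 1) := ⟨m + 1, by
    have h1 := lt_F_add_two m
    have h2 : F (m + 2) ≤ F (m + 1 + 1) := F_mono (by omega)
    omega⟩
  classical
  have hspec : m < F (Nat.find hex + 1) := Nat.find_spec hex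
  have hipos : 1 ≤ Nat.find hex := by
    rcases Nat.eq_zero_or_pos (Nat.find hex) with h0 | h
    · exfalso
      rw [h0] at hspec
      have : F (0 + 1) = 1 := by decide
      omega
    · exact h
  refine ⟨Nat.find hex, hipos, ?_, hspec⟩
  by_contra h
  push_neg at h
  have := Nat.find_min hex (m := Nat.find hex - 1) (by omega)
  rw [show Nat.find hex - 1 + 1 = Nat.find hex by omega] at this
  omega


lemma W_two_step (k : ℕ) : W (k + 2) = W (k + 1) ++ W k := rfl

lemma W_length : ∀ i, (W i).length = F i := by
  intro i
  induction i using Nat.strong_induction_on with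
  | _ i ih =>
    match i with
    | 0 => decide
    | 1 => decide
    | (k + 2) =>
        rw [W_two_step, List.length_append, ih (k + 1) (by omega), ih k (by omega)]
        have := F_add_two k
        omega

lemma W_prefix {i j : ℕ} (hi : 1 ≤ i) (hij : i ≤ j) : W i <+: W j := by
  induction j with
  | zero => exact absurd hij (by omega)
  | succ j ihj =>
      rcases Nat.lt_or_ge i (j + 1) with h | h
      · have h1 : i ≤ j := by omega
        have hj1 : 1 ≤ j := by omega
        obtain ⟨t, rfl⟩ : ∃ t, j = t + 1 := ⟨j - 1, by omega⟩
        exact (ihj h1).trans ⟨W t, (W_two_step t).symm⟩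
      · have : i = j + 1 := by omega
        rw [this]

lemma take_of_prefix {u v : List Bool} (h : u <+: v) {n : ℕ} (hn : n ≤ u.length) :
    u.take n = v.take n := by
  obtain ⟨t, rfl⟩ := h
  rw [List.take_append_of_le_length hn]

lemma pref_eq_take {n j : ℕ} (hj : 1 ≤ j) (h : n ≤ F j) : pref n = (W j).take n := by
  rw [pref]
  rcases le_or_gt (n + 2) j with hle | hlt
  · exact take_of_prefix (W_prefix (by omega) hle)
      (by rw [W_length]; have := lt_F_add_two n; omega)
  · exact (take_of_prefix (W_prefix hj (by omega)) (by rw [W_length]; omega)).symm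

lemma pref_F {i : ℕ} (hi : 1 ≤ i) : pref (F i) = W i := by
  rw [pref_eq_take hi le_rfl, ← W_length, List.take_length]

lemma pref_length (n : ℕ) : (pref n).length = n := by
  rw [pref, List.length_take, W_length]
  have := lt_F_add_two n
  omega

lemma pref_take {m n : ℕ} (h : m ≤ n) : (pref n).take m = pref m := by
  have h1 : pref n = (W (n + 2)).take n := rfl
  rw [h1, List.take_take, min_eq_left h]
  exact (pref_eq_take (by omega) (by have := lt_F_add_two n; omega)).symm

lemma pref_prefix {m n : ℕ} (h : m ≤ n) : pref m <+: pref n := by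
  rw [← pref_take h]; exact List.take_prefix _ _

def fac (a b : ℕ) : List Bool := (pref b).drop a

lemma fac_append {a b : ℕ} (h : a ≤ b) : pref b = pref a ++ fac a b := by
  rw [fac, ← pref_take h]
  exact (List.take_append_drop a (pref b)).symm

lemma fac_F (k : ℕ) : fac (F (k + 1)) (F (k + 2)) = W k := by
  rw [fac, pref_F (by omega), W_two_step, ← W_length, List.drop_left]

lemma fac_sub {c a b d : ℕ} (hca : c ≤ a) (hab : a ≤ b) (hbd : b ≤ d) :
    fac a b = ((fac c d).drop (a - c)).take (b - a) := by
  rw [fac, fac, List.drop_drop, show c + (a - c) = a by omega, ← pref_take hbd,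
    List.drop_take, show b - a = b - a by rfl]

-- decompositions
lemma decompY (k : ℕ) : fac (F (k + 5)) (F (k + 6)) = (W (k + 2) ++ W (k + 1)) ++ W (k + 2) := by
  have h := fac_F (k + 4)
  rw [show F (k + 4 + 1) = F (k + 5) from rfl, show F (k + 4 + 2) = F (k + 6) from rfl] at h
  rw [h]
  rfl

lemma decompX (k : ℕ) :
    fac (F (k + 2)) (F (k + 2) + F (k + 4)) = (W (k + 1) ++ W (k + 2)) ++ W (k + 2) := by
  have e1 : F (k + 3) = F (k + 1) + F (k + 2) := F_add_two (k + 1)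
  have e2 : F (k + 4) = F (k + 2) + F (k + 3) := F_add_two (k + 2)
  have e3 : F (k + 5) = F (k + 3) + F (k + 4) := F_add_two (k + 3)
  have hW5 : W (k + 5) = (W (k + 2) ++ ((W (k + 1) ++ W (k + 2)) ++ W (k + 2))) ++ W (k + 1) := by
    rw [W_two_step (k + 3), W_two_step (k + 2), W_two_step (k + 1)]
    simp [List.append_assoc]
  have hlen : (W (k + 2) ++ ((W (k + 1) ++ W (k + 2)) ++ W (k + 2))).length
      = F (k + 2) + F (k + 4) := by
    simp [W_length]
    omega
  have hpref : pref (F (k + 2) + F (k + 4)) = W (k + 2) ++ ((W (k + 1) ++ W (k + 2)) ++ W (k + 2)) := by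
    rw [pref_eq_take (j := k + 5) (by omega) (by omega), hW5]
    exact List.take_left' hlen
  rw [fac, hpref, ← W_length, List.drop_left]

-- swap identity
lemma swapid : ∀ k, 1 ≤ k → ∃ (P : List Bool) (p q : Bool), p ≠ q ∧
    W (k + 1) ++ W k = P ++ [p, q] ∧ W k ++ W (k + 1) = P ++ [q, p] := by
  intro k
  induction k with
  | zero => omega
  | succ k ihk =>
      intro _
      rcases Nat.eq_zero_or_pos k with rfl | hk
      · exact ⟨[true], false, true, by decide, by decide, by decide⟩
      · obtain ⟨P, p, q, hpq, h1, h2⟩ := ihk hk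
        refine ⟨W (k + 1) ++ P, q, p, hpq.symm, ?_, ?_⟩
        · rw [W_two_step k, List.append_assoc, h2, ← List.append_assoc]
        · rw [W_two_step k, List.append_assoc, h1, ← List.append_assoc]

lemma twoSwap_concat (R : List Bool) (p q : Bool) : twoSwap (R ++ [p, q]) = R ++ [q, p] := by
  rw [twoSwap]
  have h1 : (R ++ [p, q]).dropLast = R ++ [p] := by
    rw [show R ++ [p, q] = (R ++ [p]) ++ [q] by simp, List.dropLast_concat]
  rw [h1, List.dropLast_concat]
  have h2 : (R ++ [p, q]).length - 2 = R.length := by simp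
  rw [h2, List.drop_left]
  rfl

lemma last2 : ∀ k, 2 ≤ k → ∃ (P : List Bool) (p q : Bool), p ≠ q ∧
    W k = P ++ [p, q] ∧ twoSwap (W k) = P ++ [q, p] := by
  intro k hk
  match k, hk with
  | 2, _ => exact ⟨[], true, false, by decide, by decide, by decide⟩
  | (j + 3), _ =>
      obtain ⟨P, p, q, hpq, h1, _⟩ := swapid (j + 1) (by omega)
      have hW : W (j + 3) = P ++ [p, q] := by
        rw [W_two_step (j + 1)]
        exact h1
      exact ⟨P, p, q, hpq, hW, by rw [hW, twoSwap_concat]⟩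

lemma twoSwap_twoSwap {k : ℕ} (hk : 2 ≤ k) : twoSwap (twoSwap (W k)) = W k := by
  obtain ⟨P, p, q, _, h1, h2⟩ := last2 k hk
  rw [h2, twoSwap_concat, ← h1]

-- segment lemmas
lemma seg_eq_low {X Y P S : List Bool} {p q : Bool} {a c : ℕ}
    (hX : X = P ++ ([p, q] ++ S)) (hY : Y = P ++ ([q, p] ++ S))
    (hb : a + c ≤ P.length) : (X.drop a).take c = (Y.drop a).take c := by
  have h : X.take (a + c) = Y.take (a + c) := by
    rw [hX, hY, List.take_append_of_le_length hb, List.take_append_of_le_length hb]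
  calc (X.drop a).take c = (X.take (a + c)).drop a := by
        rw [List.drop_take, show a + c - a = c by omega]
    _ = (Y.take (a + c)).drop a := by rw [h]
    _ = (Y.drop a).take c := by rw [List.drop_take, show a + c - a = c by omega]

lemma seg_eq_high {X Y P S : List Bool} {p q : Bool} {a : ℕ}
    (hX : X = P ++ ([p, q] ++ S)) (hY : Y = P ++ ([q, p] ++ S))
    (ha : P.length + 2 ≤ a) : X.drop a = Y.drop a := by
  have l1 : (P ++ [p, q]).length = P.length + 2 := by simp
  have l2 : (P ++ [q, p]).length = P.length + 2 := by simp
  have dX : X.drop a = S.drop (a - (P.length + 2)) := by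
    rw [hX, ← List.append_assoc, List.drop_append,
      List.drop_eq_nil_of_le (by rw [l1]; omega), l1]
    simp
  have dY : Y.drop a = S.drop (a - (P.length + 2)) := by
    rw [hY, ← List.append_assoc, List.drop_append,
      List.drop_eq_nil_of_le (by rw [l2]; omega), l2]
    simp
  rw [dX, dY]

lemma seg_swap {X Y P S : List Bool} {p q : Bool} {a : ℕ}
    (hX : X = P ++ ([p, q] ++ S)) (hY : Y = P ++ ([q, p] ++ S))
    (ha : a ≤ P.length) :
    (Y.drop a).take (P.length + 2 - a) = twoSwap ((X.drop a).take (P.length + 2 - a)) := by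
  have hXt : X.take (P.length + 2) = P ++ [p, q] := by
    rw [hX, ← List.append_assoc]
    exact List.take_left' (by simp)
  have hYt : Y.take (P.length + 2) = P ++ [q, p] := by
    rw [hY, ← List.append_assoc]
    exact List.take_left' (by simp)
  have eX : (X.drop a).take (P.length + 2 - a) = P.drop a ++ [p, q] := by
    rw [← List.drop_take, hXt, List.drop_append_of_le_length ha]
  have eY : (Y.drop a).take (P.length + 2 - a) = P.drop a ++ [q, p] := by
    rw [← List.drop_take, hYt, List.drop_append_of_le_length ha]
  rw [eX, eY, twoSwap_concat]

-- package of the two window decompositions around the swap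
lemma seg_package (k : ℕ) : ∃ (P S : List Bool) (p q : Bool), p ≠ q ∧
    fac (F (k + 2)) (F (k + 2) + F (k + 4)) = P ++ ([q, p] ++ S) ∧
    fac (F (k + 5)) (F (k + 6)) = P ++ ([p, q] ++ S) ∧
    P.length + 2 = F (k + 3) := by
  obtain ⟨P, p, q, hpq, h1, h2⟩ := swapid (k + 1) (by omega)
  have h1' : W (k + 2) ++ W (k + 1) = P ++ [p, q] := h1
  have h2' : W (k + 1) ++ W (k + 2) = P ++ [q, p] := h2
  refine ⟨P, W (k + 2), p, q, hpq, ?_, ?_, ?_⟩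
  · rw [decompX, h2', List.append_assoc]
  · rw [decompY, h1', List.append_assoc]
  · have hl := congrArg List.length h1'
    rw [List.length_append, List.length_append, W_length, W_length] at hl
    have e : F (k + 3) = F (k + 1) + F (k + 2) := F_add_two (k + 1)
    simp at hl
    omega

lemma take_W {a b : ℕ} (ha : 1 ≤ a) (hab : a ≤ b) : (W b).take (F a) = W a := by
  have h := take_of_prefix (W_prefix ha hab) (n := F a) (by rw [W_length])
  rw [← h, ← W_length, List.take_length]

lemma succ_exists (c bound ℓ : ℕ) (hmem : c < bound ∧ F ℓ ≤ alphaBar bound) :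
    ∃ nn, c < nn ∧ F ℓ ≤ alphaBar nn ∧ nn ≤ bound ∧
      ∀ j, c < j → j < nn → alphaBar j < F ℓ := by
  classical
  have hne : ∃ x, c < x ∧ F ℓ ≤ alphaBar x := ⟨bound, hmem⟩
  refine ⟨Nat.find hne, (Nat.find_spec hne).1, (Nat.find_spec hne).2,
    Nat.find_min' hne hmem, ?_⟩
  intro j h1 h2
  by_contra hc
  push_neg at hc
  exact absurd (Nat.find_min' hne ⟨h1, hc⟩) (by omega)

lemma key (n : ℕ) : ∀ ℓ m : ℕ, 4 ≤ ℓ → F ℓ ≤ alphaBar m → F ℓ ≤ alphaBar n → m < n →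
    (∀ j, m < j → j < n → alphaBar j < F ℓ) →
    ∃ k, (k = ℓ - 2 ∨ k = ℓ - 1) ∧ n = m + F k ∧
      (fac m n = W k ∨ fac m n = twoSwap (W k)) := by
  induction n using Nat.strong_induction_on with
  | _ n ih =>
    intro ℓ m hl hm hn hmn hbet
    obtain ⟨l, rfl⟩ : ∃ l, ℓ = l + 4 := ⟨ℓ - 4, by omega⟩
    have hF4 : (5 : ℕ) ≤ F (l + 4) := by
      have h1 : F 4 ≤ F (l + 4) := F_mono (by omega)
      have h2 : F 4 = 5 := by decide
      omega
    have hmge : F (l + 4) ≤ m := le_trans hm (alphaBar_le m)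
    obtain ⟨i, hi1, hiF, hiF'⟩ := exists_leading (show 1 ≤ m by omega)
    have hiℓ : l + 4 ≤ i := by
      by_contra h
      push_neg at h
      have : F (i + 1) ≤ F (l + 4) := F_mono (by omega)
      omega
    have hnub : n ≤ F (i + 1) := by
      by_contra h
      push_neg at h
      have h1 := hbet (F (i + 1)) (by omega) h
      have h2 : alphaBar (F (i + 1)) = F (i + 1) := alphaBar_fib ⟨i + 2, rfl⟩
      have h3 : F (l + 4) ≤ F (i + 1) := F_mono (by omega)
      omega
    rcases eq_or_lt_of_le hiF with hEq | hInt
    · -- CASE A : m = F i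
      rcases (show i = l + 4 ∨ i = l + 5 ∨ i = l + 6 ∨ l + 7 ≤ i by omega) with hi | hi | hi | hi
      · -- A1 : i = ℓ
        subst hi
        have hne : n = F (l + 5) := by
          rcases eq_or_lt_of_le hnub with h | h
          · exact h
          · exfalso
            have := alpha_gap_empty (t := l) (x := n) (by omega) h
            omega
        refine ⟨l + 3, Or.inr (by omega), ?_, Or.inl ?_⟩
        · have e : F (l + 5) = F (l + 3) + F (l + 4) := F_add_two (l + 3)
          omega
        · have hf : fac (F (l + 4)) (F (l + 5)) = W (l + 3) := fac_F (l + 3)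
          rw [hne, ← hEq, hf]
      · -- A2 : i = ℓ + 1
        subst hi
        have eC : F (l + 5) = F (l + 3) + F (l + 4) := F_add_two (l + 3)
        have eB : F (l + 4) = F (l + 2) + F (l + 3) := F_add_two (l + 2)
        have eD : F (l + 6) = F (l + 4) + F (l + 5) := F_add_two (l + 4)
        have hcorr : ∀ x, F (l + 2) < x → x < F (l + 2) + F (l + 4) →
            alphaBar (2 * F (l + 3) + x) = alphaBar x := fun x h1 h2 => alpha_corr h1 h2
        have hp2 : 0 < F (l + 2) := F_pos _
        have hp3 : 0 < F (l + 3) := F_pos _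
        have hnn : alphaBar (2 * F (l + 3) + F (l + 4)) = F (l + 4) := by
          rw [hcorr (F (l + 4)) (by omega) (by omega)]
          exact alphaBar_fib ⟨l + 5, rfl⟩
        have hmnn : m < 2 * F (l + 3) + F (l + 4) := by omega
        have hne : n = 2 * F (l + 3) + F (l + 4) := by
          rcases lt_trichotomy n (2 * F (l + 3) + F (l + 4)) with h | h | h
          · exfalso
            obtain ⟨x, rfl⟩ : ∃ x, n = 2 * F (l + 3) + x := ⟨n - 2 * F (l + 3), by omega⟩
            have hx1 : F (l + 2) < x := by omega
            have hx2 : x < F (l + 2) + F (l + 4) := by omega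
            have := hcorr x hx1 hx2
            have hxle := alphaBar_le x
            omega
          · exact h
          · exfalso
            have h1 := hbet (2 * F (l + 3) + F (l + 4)) (by omega) h
            omega
        refine ⟨l + 3, Or.inr (by omega), by omega, Or.inl ?_⟩
        have hfs := fac_sub (c := F (l + 5)) (a := m) (b := n) (d := F (l + 6))
          (by omega) (by omega) (by omega)
        have hfY : fac (F (l + 5)) (F (l + 6)) = W (l + 4) := fac_F (l + 4)
        rw [hfs, hfY, show m - F (l + 5) = 0 by omega, List.drop_zero,
          show n - m = F (l + 3) by omega]
        exact take_W (by omega) (by omega)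
      · -- A3a : i = ℓ + 2
        subst hi
        have eC : F (l + 5) = F (l + 3) + F (l + 4) := F_add_two (l + 3)
        have eB : F (l + 4) = F (l + 2) + F (l + 3) := F_add_two (l + 2)
        have eD : F (l + 6) = F (l + 4) + F (l + 5) := F_add_two (l + 4)
        have eE : F (l + 7) = F (l + 5) + F (l + 6) := F_add_two (l + 5)
        have hcorr : ∀ x, F (l + 3) < x → x < F (l + 3) + F (l + 5) →
            alphaBar (2 * F (l + 4) + x) = alphaBar x := fun x h1 h2 => alpha_corr h1 h2
        have hp3 : 0 < F (l + 3) := F_pos _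
        have hp2 : 0 < F (l + 2) := F_pos _
        have hnn : alphaBar (2 * F (l + 4) + F (l + 4)) = F (l + 4) := by
          rw [hcorr (F (l + 4)) (by omega) (by omega)]
          exact alphaBar_fib ⟨l + 5, rfl⟩
        have hne : n = 2 * F (l + 4) + F (l + 4) := by
          rcases lt_trichotomy n (2 * F (l + 4) + F (l + 4)) with h | h | h
          · exfalso
            obtain ⟨x, rfl⟩ : ∃ x, n = 2 * F (l + 4) + x := ⟨n - 2 * F (l + 4), by omega⟩
            have hx1 : F (l + 3) < x := by omega
            have hx2 : x < F (l + 3) + F (l + 5) := by omega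
            have := hcorr x hx1 hx2
            have hxle := alphaBar_le x
            omega
          · exact h
          · exfalso
            have h1 := hbet (2 * F (l + 4) + F (l + 4)) (by omega) h
            omega
        refine ⟨l + 2, Or.inl (by omega), by omega, Or.inl ?_⟩
        have hfs := fac_sub (c := F (l + 6)) (a := m) (b := n) (d := F (l + 7))
          (by omega) (by omega) (by omega)
        have hfY : fac (F (l + 6)) (F (l + 7)) = W (l + 5) := fac_F (l + 5)
        rw [hfs, hfY, show m - F (l + 6) = 0 by omega, List.drop_zero,
          show n - m = F (l + 2) by omega]
        exact take_W (by omega) (by omega)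
      · -- A3b : i ≥ ℓ + 3, m = F i
        obtain ⟨k, rfl⟩ : ∃ k, i = k + 5 := ⟨i - 5, by omega⟩
        have hkl : l + 2 ≤ k := by omega
        have eA : F (k + 3) = F (k + 1) + F (k + 2) := F_add_two (k + 1)
        have eB : F (k + 4) = F (k + 2) + F (k + 3) := F_add_two (k + 2)
        have eC : F (k + 5) = F (k + 3) + F (k + 4) := F_add_two (k + 3)
        have eD : F (k + 6) = F (k + 4) + F (k + 5) := F_add_two (k + 4)
        have hp1 : 0 < F (k + 1) := F_pos _
        have hp2 : 0 < F (k + 2) := F_pos _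
        have hcorr : ∀ x, F (k + 2) < x → x < F (k + 2) + F (k + 4) →
            alphaBar (2 * F (k + 3) + x) = alphaBar x := fun x h1 h2 => alpha_corr h1 h2
        -- successor of F (k+2) downstairs
        have hSne : F (k + 2) < F (k + 3) ∧ F (l + 4) ≤ alphaBar (F (k + 3)) := by
          constructor
          · omega
          · have hh : alphaBar (F (k + 3)) = F (k + 3) := alphaBar_fib ⟨k + 4, rfl⟩
            rw [hh]
            exact F_mono (by omega)
        obtain ⟨nn, hnn1, hnn2, hnnle, hcons⟩ :=
          succ_exists (F (k + 2)) (F (k + 3)) (l + 4) hSne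
        have hihn : nn < n := by
          have : F (k + 3) < F (k + 5) := F_lt (by omega) (by omega)
          omega
        obtain ⟨k₀, hk₀, hnnval, hfacd⟩ := ih nn hihn (l + 4) (F (k + 2)) (by omega)
          (by
            have hh : alphaBar (F (k + 2)) = F (k + 2) := alphaBar_fib ⟨k + 3, rfl⟩
            rw [hh]
            exact F_mono (by omega))
          hnn2 hnn1 hcons
        have hk₀' : k₀ = l + 2 ∨ k₀ = l + 3 := by omega
        -- upstairs successor
        have hupmem : F (l + 4) ≤ alphaBar (2 * F (k + 3) + nn) := by
          rw [hcorr nn hnn1 (by omega)]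
          exact hnn2
        have hne : n = 2 * F (k + 3) + nn := by
          rcases lt_trichotomy n (2 * F (k + 3) + nn) with h | h | h
          · exfalso
            obtain ⟨x, rfl⟩ : ∃ x, n = 2 * F (k + 3) + x := ⟨n - 2 * F (k + 3), by omega⟩
            have hx1 : F (k + 2) < x := by omega
            have hx2 : x < nn := by omega
            have := hcorr x hx1 (by omega)
            have := hcons x hx1 hx2
            omega
          · exact h
          · exfalso
            have h1 := hbet (2 * F (k + 3) + nn) (by omega) h
            omega
        have hFk₀ : F k₀ ≤ F (l + 3) := F_mono (by omega)
        have hl3k1 : F (l + 3) ≤ F (k + 1) := F_mono (by omega)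
        refine ⟨k₀, by omega, by omega, ?_⟩
        -- factor equality by seg_eq_low
        obtain ⟨P, Sw, p, q, hpq, hX, hY, hP⟩ := seg_package k
        have hfup : fac m n = ((fac (F (k + 5)) (F (k + 6))).drop 0).take (F k₀) := by
          have := fac_sub (c := F (k + 5)) (a := m) (b := n) (d := F (k + 6))
            (by omega) (by omega) (by omega)
          rw [this, show m - F (k + 5) = 0 by omega, show n - m = F k₀ by omega]
        have hfdn : fac (F (k + 2)) nn =
            ((fac (F (k + 2)) (F (k + 2) + F (k + 4))).drop 0).take (F k₀) := by
          have := fac_sub (c := F (k + 2)) (a := F (k + 2)) (b := nn)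
            (d := F (k + 2) + F (k + 4)) (by omega) (by omega) (by omega)
          rw [this, show F (k + 2) - F (k + 2) = 0 by omega, show nn - F (k + 2) = F k₀ by omega]
        have hF2 : 2 ≤ F (k + 2) := by
          have h1 : F 2 ≤ F (k + 2) := F_mono (by omega)
          have h2 : F 2 = 2 := by decide
          omega
        have hseg := seg_eq_low (a := 0) (c := F k₀) hX hY (by omega)
        rw [hfup, ← hseg, ← hfdn]
        exact hfacd
    · -- CASE B : F i < m
      have hil5 : l + 5 ≤ i := by
        by_contra h
        push_neg at h
        have hieq : i = l + 4 := by omega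
        subst hieq
        have := alpha_gap_empty (t := l) (x := m) hInt hiF'
        omega
      obtain ⟨k, rfl⟩ : ∃ k, i = k + 5 := ⟨i - 5, by omega⟩
      have hkl : l ≤ k := by omega
      have hnub6 : n ≤ F (k + 6) := hnub
      have hiF6 : m < F (k + 6) := hiF'
      have eA : F (k + 3) = F (k + 1) + F (k + 2) := F_add_two (k + 1)
      have eB : F (k + 4) = F (k + 2) + F (k + 3) := F_add_two (k + 2)
      have eC : F (k + 5) = F (k + 3) + F (k + 4) := F_add_two (k + 3)
      have eD : F (k + 6) = F (k + 4) + F (k + 5) := F_add_two (k + 4)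
      have hp1 : 0 < F (k + 1) := F_pos _
      have hp2 : 0 < F (k + 2) := F_pos _
      have hcorr : ∀ x, F (k + 2) < x → x < F (k + 2) + F (k + 4) →
          alphaBar (2 * F (k + 3) + x) = alphaBar x := fun x h1 h2 => alpha_corr h1 h2
      obtain ⟨m', rfl⟩ : ∃ m', m = 2 * F (k + 3) + m' := ⟨m - 2 * F (k + 3), by omega⟩
      have hm'w : F (k + 2) < m' ∧ m' < F (k + 2) + F (k + 4) := by omega
      have hm'A : F (l + 4) ≤ alphaBar m' := by
        rw [← hcorr m' hm'w.1 hm'w.2]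
        exact hm
      have hm'ge : F (l + 4) ≤ m' := le_trans hm'A (alphaBar_le m')
      obtain ⟨P, Sw, p, q, hpq, hX, hY, hP⟩ := seg_package k
      rcases eq_or_lt_of_le hnub6 with hnF | hnlt
      · -- B2 : n = F (k+6)
        rcases eq_or_lt_of_le hkl with hkeq | hkgt
        · -- k = l : forced configuration
          subst hkeq
          have hm'eq : m' = F (l + 4) := by
            rcases eq_or_lt_of_le hm'ge with h | h
            · omega
            · exfalso
              have := alpha_gap_empty (t := l) (x := m') h (by omega)
              omega
          subst hm'eq
          refine ⟨l + 2, Or.inl (by omega), by omega, Or.inl ?_⟩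
          have hfs := fac_sub (c := F (l + 5)) (a := 2 * F (l + 3) + F (l + 4)) (b := n)
            (d := F (l + 6)) (by omega) (by omega) (by omega)
          rw [hfs, decompY, show 2 * F (l + 3) + F (l + 4) - F (l + 5) = F (l + 3) by omega,
            show n - (2 * F (l + 3) + F (l + 4)) = F (l + 2) by omega]
          have hlen : (W (l + 2) ++ W (l + 1)).length = F (l + 3) := by
            simp [W_length]; omega
          rw [← hlen, List.drop_left, ← W_length, List.take_length]
        · -- k ≥ l + 1
          have hT : alphaBar (F (k + 2) + F (k + 4)) = F (k + 3) := by
            have h := alpha_tight (k + 2) (by omega)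
            rw [show F (k + 2 + 2) = F (k + 4) from rfl] at h
            rw [Nat.add_comm]
            exact h
          have hxmem : m' < F (k + 2) + F (k + 4) ∧
              F (l + 4) ≤ alphaBar (F (k + 2) + F (k + 4)) := by
            refine ⟨by omega, ?_⟩
            rw [hT]
            exact F_mono (by omega)
          obtain ⟨n₀, hn₀1, hn₀2, hn₀le, hconsd⟩ :=
            succ_exists m' (F (k + 2) + F (k + 4)) (l + 4) hxmem
          have hn₀lt : n₀ < n := by omega
          obtain ⟨k₀, hk₀, hn₀val, hfacd⟩ := ih n₀ hn₀lt (l + 4) m' (by omega)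
            hm'A hn₀2 hn₀1 hconsd
          have hk₀' : k₀ = l + 2 ∨ k₀ = l + 3 := by omega
          have hn₀ge : F (k + 2) + F (k + 4) ≤ n₀ := by
            by_contra h
            push_neg at h
            have hj := hbet (2 * F (k + 3) + n₀) (by omega) (by omega)
            have := hcorr n₀ (by omega) (by omega)
            omega
          have hn₀eq : n₀ = F (k + 2) + F (k + 4) := by omega
          have hFk₀ : F k₀ ≤ F (k + 2) := F_mono (by omega)
          refine ⟨k₀, by omega, by omega, ?_⟩
          -- m' ≥ F (k+4) so the segment is above the swap
          have hm'geF : F (k + 4) ≤ m' := by omega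
          have hfup : fac (2 * F (k + 3) + m') n =
              ((fac (F (k + 5)) (F (k + 6))).drop (m' - F (k + 2))).take (F k₀) := by
            have := fac_sub (c := F (k + 5)) (a := 2 * F (k + 3) + m') (b := n)
              (d := F (k + 6)) (by omega) (by omega) (by omega)
            rw [this, show 2 * F (k + 3) + m' - F (k + 5) = m' - F (k + 2) by omega,
              show n - (2 * F (k + 3) + m') = F k₀ by omega]
          have hfdn : fac m' n₀ =
              ((fac (F (k + 2)) (F (k + 2) + F (k + 4))).drop (m' - F (k + 2))).take (F k₀) := by
            have := fac_sub (c := F (k + 2)) (a := m') (b := n₀)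
              (d := F (k + 2) + F (k + 4)) (by omega) (by omega) (by omega)
            rw [this, show n₀ - m' = F k₀ by omega]
          have hseg := seg_eq_high (a := m' - F (k + 2)) hX hY (by omega)
          rw [hfup, ← hseg, ← hfdn]
          exact hfacd
      · -- B1 : n < F (k+6)
        have hnlt6 : n < F (k + 6) := hnlt
        obtain ⟨n', rfl⟩ : ∃ n', n = 2 * F (k + 3) + n' := ⟨n - 2 * F (k + 3), by omega⟩
        have hn'w : F (k + 2) < n' ∧ n' < F (k + 2) + F (k + 4) := by omega
        have hn'A : F (l + 4) ≤ alphaBar n' := by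
          rw [← hcorr n' hn'w.1 hn'w.2]
          exact hn
        have hconsd : ∀ j, m' < j → j < n' → alphaBar j < F (l + 4) := by
          intro j h1 h2
          have hjw : F (k + 2) < j ∧ j < F (k + 2) + F (k + 4) := by omega
          have := hcorr j hjw.1 hjw.2
          have := hbet (2 * F (k + 3) + j) (by omega) (by omega)
          omega
        obtain ⟨k₀, hk₀, hn'val, hfacd⟩ := ih n' (by omega) (l + 4) m' (by omega)
          hm'A hn'A (by omega) hconsd
        have hk₀' : k₀ = l + 2 ∨ k₀ = l + 3 := by omega
        have hFk₀2 : 2 ≤ F k₀ := by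
          have h1 : F 2 ≤ F k₀ := F_mono (by omega)
          have h2 : F 2 = 2 := by decide
          omega
        have hFk₀ : F k₀ ≤ F (l + 3) := F_mono (by omega)
        refine ⟨k₀, by omega, by omega, ?_⟩
        have hfup : fac (2 * F (k + 3) + m') (2 * F (k + 3) + n') =
            ((fac (F (k + 5)) (F (k + 6))).drop (m' - F (k + 2))).take (F k₀) := by
          have := fac_sub (c := F (k + 5)) (a := 2 * F (k + 3) + m')
            (b := 2 * F (k + 3) + n') (d := F (k + 6)) (by omega) (by omega) (by omega)
          rw [this, show 2 * F (k + 3) + m' - F (k + 5) = m' - F (k + 2) by omega,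
            show 2 * F (k + 3) + n' - (2 * F (k + 3) + m') = F k₀ by omega]
        have hfdn : fac m' n' =
            ((fac (F (k + 2)) (F (k + 2) + F (k + 4))).drop (m' - F (k + 2))).take (F k₀) := by
          have := fac_sub (c := F (k + 2)) (a := m') (b := n')
            (d := F (k + 2) + F (k + 4)) (by omega) (by omega) (by omega)
          rw [this, show n' - m' = F k₀ by omega]
        rcases lt_trichotomy n' (F (k + 4)) with hcase | hcase | hcase
        · rcases eq_or_lt_of_le (show n' + 1 ≤ F (k + 4) by omega) with hced | hced
          · -- n' = F (k+4) - 1 : impossible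
            exfalso
            have hsub := alpha_fib_sub_one (k + 4) (by omega)
            have : n' = F (k + 4) - 1 := by omega
            rw [← this] at hsub
            omega
          · -- n' ≤ F (k+4) - 2 : below the swap
            have hseg := seg_eq_low (a := m' - F (k + 2)) (c := F k₀) hX hY (by omega)
            rw [hfup, ← hseg, ← hfdn]
            exact hfacd
        · -- n' = F (k+4) : swap case
          have hb : m' - F (k + 2) + F k₀ = P.length + 2 := by omega
          have hseg := seg_swap (a := m' - F (k + 2)) hX hY (by omega)
          rw [show P.length + 2 - (m' - F (k + 2)) = F k₀ by omega] at hseg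
          rw [hfup, hseg, ← hfdn]
          rcases hfacd with hfd | hfd
          · exact Or.inr (by rw [hfd])
          · rw [hfd, twoSwap_twoSwap (by omega)]
            exact Or.inl rfl
        · -- n' > F (k+4) : above the swap
          have hm'geF : F (k + 4) ≤ m' := by
            by_contra h
            push_neg at h
            have hj := hbet (2 * F (k + 3) + F (k + 4)) (by omega) (by omega)
            have := hcorr (F (k + 4)) (by omega) (by omega)
            have : alphaBar (F (k + 4)) = F (k + 4) := alphaBar_fib ⟨k + 5, rfl⟩
            have : F (l + 4) ≤ F (k + 4) := F_mono (by omega)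
            omega
          have hseg := seg_eq_high (a := m' - F (k + 2)) hX hY (by omega)
          rw [hfup, ← hseg, ← hfdn]
          exact hfacd


lemma mem_V_iff {ℓ : ℕ} (hℓ : 4 ≤ ℓ) {v : List Bool} :
    v ∈ V ℓ ↔ v = pref v.length ∧ F ℓ ≤ alphaBar v.length := by
  have hF4 : (5 : ℕ) ≤ F ℓ := by
    have h1 : F 4 ≤ F ℓ := F_mono (by omega)
    have h2 : F 4 = 5 := by decide
    omega
  constructor
  · rintro ⟨⟨i, hpre⟩, halpha⟩
    have hlen : F ℓ ≤ alphaBar v.length := by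
      have h1 := halpha.length_le
      rw [W_length, alphaW, pref_length] at h1
      exact h1
    have hge : F ℓ ≤ v.length := le_trans hlen (alphaBar_le _)
    have hi1 : 1 ≤ i := by
      by_contra h
      push_neg at h
      interval_cases i
      · have := hpre.length_le
        simp [W] at this
        omega
    have hvlen : v.length ≤ F i := by
      have := hpre.length_le
      rw [W_length] at this
      exact this
    refine ⟨?_, hlen⟩
    have hpt : pref v.length = (W i).take v.length := pref_eq_take hi1 hvlen
    rw [hpt]
    exact List.prefix_iff_eq_take.mp hpre
  · rintro ⟨hv, hα⟩
    refine ⟨⟨v.length + 2, ?_⟩, ?_⟩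
    · conv_lhs => rw [hv]
      show (W (v.length + 2)).take v.length <+: W (v.length + 2)
      exact List.take_prefix _ _
    · rw [alphaW]
      have h1 : W ℓ = pref (F ℓ) := (pref_F (by omega)).symm
      rw [h1]
      exact pref_prefix hα

theorem consecutive_suffix (ℓ : ℕ) (hℓ : 4 ≤ ℓ) (u v : List Bool)
    (h : ConsecInV (V ℓ) u v) :
    ∃ s : List Bool,
      (s = W (ℓ - 2) ∨ s = twoSwap (W (ℓ - 2)) ∨ s = W (ℓ - 1) ∨ s = twoSwap (W (ℓ - 1))) ∧
      v = u ++ s := by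
  obtain ⟨huV, hvV, hpre, hne, hcons⟩ := h
  obtain ⟨hu1, hu2⟩ := (mem_V_iff hℓ).mp huV
  obtain ⟨hv1, hv2⟩ := (mem_V_iff hℓ).mp hvV
  have hmn : u.length < v.length := by
    rcases eq_or_lt_of_le hpre.length_le with h | h
    · exact absurd (hpre.eq_of_length h) hne
    · exact h
  have hbet : ∀ j, u.length < j → j < v.length → alphaBar j < F ℓ := by
    intro j h1 h2
    by_contra hc
    push_neg at hc
    have hw : pref j ∈ V ℓ := (mem_V_iff hℓ).mpr
      ⟨by rw [pref_length], by rw [pref_length]; exact hc⟩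
    have hu_w : u <+: pref j := by
      conv_lhs => rw [hu1]
      exact pref_prefix (le_of_lt h1)
    have hw_v : pref j <+: v := by
      conv_rhs => rw [hv1]
      exact pref_prefix (le_of_lt h2)
    rcases hcons (pref j) hw hu_w hw_v with he | he
    · have := congrArg List.length he
      rw [pref_length] at this
      omega
    · have := congrArg List.length he
      rw [pref_length] at this
      omega
  obtain ⟨k, hk, hnm, hfac⟩ := key v.length ℓ u.length hℓ hu2 hv2 hmn hbet
  refine ⟨fac u.length v.length, ?_, ?_⟩
  · rcases hk with hk | hk <;> rcases hfac with hf | hf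
    · exact Or.inl (by rw [hf, hk])
    · exact Or.inr (Or.inl (by rw [hf, hk]))
    · exact Or.inr (Or.inr (Or.inl (by rw [hf, hk])))
    · exact Or.inr (Or.inr (Or.inr (by rw [hf, hk])))
  · have hfa := fac_append (le_of_lt hmn)
    rw [← hu1, ← hv1] at hfa
    exact hfa
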